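/- For a natural number m ≥ 1 and real n with 0 < n < 2: ∫₀^∞ x^m cos(πnx)/(e^{2πx}-1) dx = (√π/(2π)^{m+1}) Σ_{k=0}^∞ (k+1)^{-(m+1)} · Σ_{ℓ=0}^∞ [Γ(m+1+2ℓ)/(ℓ! Γ(1/2+ℓ))] (-n²/(16(1+k)²))^ℓ. -/

import Mathlib

/-!
Expand `1 / (e^{2πx} - 1) = ∑ₖ e^{-2π(k+1)x}` and then `cos (πnx)` in its Taylor series. Both
interchanges of sum and integral are justified by absolute convergence: the first because
`∑ₖ (k+1)^{-(m+1)} < ∞`, the second because `|πn| < 2π(k+1)`. Every resulting integral is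
`∫₀^∞ x^p e^{-ax} dx = p! / a^{p+1}`, and `Γ(l + 1/2) = (2l)! √π / (4^l l!)` puts the coefficients
in the stated form.
-/

open Real Set MeasureTheory
open scoped Nat

lemma Nat.factorial_two_mul_eq_mul_doubleFactorial (l : ℕ) :
    (2 * l)! = 2 ^ l * l ! * (2 * l - 1)‼ := by
  cases l with
  | zero => rfl
  | succ j =>
    rw [show 2 * (j + 1) = (2 * j + 1) + 1 by ring, Nat.factorial_eq_mul_doubleFactorial,
      show 2 * j + 1 + 1 = 2 * (j + 1) by ring, Nat.doubleFactorial_two_mul,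
      show 2 * (j + 1) - 1 = 2 * j + 1 by omega]

lemma Real.Gamma_half_add_nat (l : ℕ) :
    Gamma (1 / 2 + l) = (2 * l)! * √π / (2 ^ (2 * l) * l !) := by
  rw [add_comm, Gamma_nat_add_half, Nat.factorial_two_mul_eq_mul_doubleFactorial]
  push_cast
  field_simp
  ring

lemma integrableOn_pow_mul_exp_neg_mul_Ioi (p : ℕ) {a : ℝ} (ha : 0 < a) :
    IntegrableOn (fun x : ℝ => x ^ p * exp (-(a * x))) (Ioi 0) := by
  simpa using integrableOn_rpow_mul_exp_neg_mul_rpow (p := 1) (s := p) (b := a)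
    (by linarith [(Nat.cast_nonneg p : (0:ℝ) ≤ p)]) one_pos ha

lemma integral_pow_mul_exp_neg_mul_Ioi (p : ℕ) {a : ℝ} (ha : 0 < a) :
    ∫ x in Ioi (0:ℝ), x ^ p * exp (-(a * x)) = p ! / a ^ (p + 1) := by
  have h := integral_rpow_mul_exp_neg_mul_Ioi (a := (p:ℝ) + 1) (by positivity) ha
  simp only [add_sub_cancel_right, rpow_natCast] at h
  rw [h, Gamma_nat_eq_factorial, show (p:ℝ) + 1 = ((p + 1 : ℕ) : ℝ) by push_cast; ring,
    rpow_natCast, one_div, inv_pow]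
  field_simp

lemma Real.hasSum_exp_neg_succ_mul {t : ℝ} (ht : 0 < t) :
    HasSum (fun k : ℕ => exp (-((k + 1) * t))) (exp t - 1)⁻¹ := by
  have hr : exp (-t) < 1 := exp_lt_one_iff.2 (neg_neg_of_pos ht)
  have hsum : (exp t - 1)⁻¹ = exp (-t) * (1 - exp (-t))⁻¹ := by
    have : exp t - 1 ≠ 0 := (sub_pos.2 (one_lt_exp_iff.2 ht)).ne'
    rw [exp_neg]
    field_simp
  rw [hsum]
  refine ((hasSum_geometric_of_lt_one (exp_pos _).le hr).mul_left _).congr_fun fun k => ?_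
  rw [← exp_nat_mul, ← exp_add]
  ring_nf

lemma summable_descFactorial_mul_pow_two_mul (m : ℕ) {r : ℝ} (hr : |r| < 1) :
    Summable (fun l : ℕ => ((2 * l + m).descFactorial m : ℝ) * r ^ (2 * l)) :=
  (summable_descFactorial_mul_geometric_of_norm_lt_one m (r := r) hr).comp_injective
    (mul_right_injective₀ (two_ne_zero' ℕ))

lemma hasSum_integral_pow_mul_cos_mul_exp_neg (m : ℕ) {a b : ℝ} (hba : |b| < a) :
    HasSum (fun l : ℕ => (-1) ^ l * b ^ (2 * l) / (2 * l)! * ((m + 2 * l)! / a ^ (m + 2 * l + 1)))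
      (∫ x in Ioi (0:ℝ), x ^ m * cos (b * x) * exp (-(a * x))) := by
  have ha : 0 < a := (abs_nonneg b).trans_lt hba
  set F : ℕ → ℝ → ℝ := fun l x =>
    (-1) ^ l * b ^ (2 * l) / (2 * l)! * (x ^ (m + 2 * l) * exp (-(a * x))) with hF
  have hF_int (l : ℕ) : Integrable (F l) (volume.restrict (Ioi 0)) :=
    (integrableOn_pow_mul_exp_neg_mul_Ioi (m + 2 * l) ha).const_mul _
  have hF_integral (l : ℕ) : ∫ x in Ioi (0:ℝ), F l x =
      (-1) ^ l * b ^ (2 * l) / (2 * l)! * ((m + 2 * l)! / a ^ (m + 2 * l + 1)) := by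
    rw [integral_const_mul, integral_pow_mul_exp_neg_mul_Ioi _ ha]
  have hF_norm (l : ℕ) : ∫ x in Ioi (0:ℝ), ‖F l x‖ =
      1 / a ^ (m + 1) * (((2 * l + m).descFactorial m : ℝ) * (b / a) ^ (2 * l)) := by
    have hpt : ∀ x ∈ Ioi (0:ℝ), ‖F l x‖ =
        b ^ (2 * l) / (2 * l)! * (x ^ (m + 2 * l) * exp (-(a * x))) := fun x (hx : 0 < x) => by
      rw [hF, norm_mul, norm_div, norm_mul, norm_pow, norm_neg, norm_one, one_pow, one_mul,
        Real.norm_of_nonneg ((even_two_mul l).pow_nonneg b), RCLike.norm_natCast,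
        Real.norm_of_nonneg (by positivity)]
    rw [setIntegral_congr_fun measurableSet_Ioi hpt, integral_const_mul,
      integral_pow_mul_exp_neg_mul_Ioi _ ha]
    have hdesc : ((m + 2 * l)! : ℝ) = (2 * l)! * (2 * l + m).descFactorial m := by
      rw [add_comm m]
      have := Nat.factorial_mul_descFactorial (Nat.le_add_left m (2 * l))
      rw [Nat.add_sub_cancel] at this
      exact_mod_cast this.symm
    rw [hdesc, div_pow]
    field_simp
    ring
  have hsum (x : ℝ) : HasSum (fun l => F l x) (x ^ m * cos (b * x) * exp (-(a * x))) := by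
    rw [mul_right_comm]
    refine ((hasSum_cos (b * x)).mul_left _).congr_fun fun l => ?_
    simp only [hF, mul_pow, pow_add]
    ring
  have hr : |b / a| < 1 := by
    rw [abs_div, abs_of_pos ha]
    exact (div_lt_one ha).2 hba
  have hF_sum : Summable fun l => ∫ x in Ioi (0:ℝ), ‖F l x‖ :=
    ((summable_descFactorial_mul_pow_two_mul m hr).mul_left _).congr fun l => (hF_norm l).symm
  simpa only [hF_integral, fun x => (hsum x).tsum_eq] using
    hasSum_integral_of_summable_integral_norm hF_int hF_sum

lemma integral_pow_mul_div_exp_sub_one_eq_tsum {m : ℕ} (hm : 1 ≤ m) {c : ℝ} (hc : 0 < c)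
    {g : ℝ → ℝ} (hg : AEStronglyMeasurable g (volume.restrict (Ioi 0))) (hg1 : ∀ x, |g x| ≤ 1) :
    ∫ x in Ioi (0:ℝ), x ^ m * g x / (exp (c * x) - 1) =
      ∑' k : ℕ, ∫ x in Ioi (0:ℝ), x ^ m * g x * exp (-(c * (k + 1) * x)) := by
  set G : ℕ → ℝ → ℝ := fun k x => x ^ m * g x * exp (-(c * (k + 1) * x)) with hG
  have hck (k : ℕ) : 0 < c * (k + 1) := by positivity
  have hG_le (k : ℕ) : ∀ᵐ x ∂(volume.restrict (Ioi 0)),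
      ‖G k x‖ ≤ x ^ m * exp (-(c * (k + 1) * x)) := by
    filter_upwards [ae_restrict_mem measurableSet_Ioi] with x (hx : 0 < x)
    rw [hG, norm_mul, norm_mul, norm_pow, Real.norm_of_nonneg hx.le,
      Real.norm_of_nonneg (exp_pos _).le, Real.norm_eq_abs]
    exact mul_le_mul_of_nonneg_right (mul_le_of_le_one_right (by positivity) (hg1 x))
      (exp_pos _).le
  have hG_int (k : ℕ) : Integrable (G k) (volume.restrict (Ioi 0)) :=
    (integrableOn_pow_mul_exp_neg_mul_Ioi m (hck k)).mono'
      (((continuous_pow m).aestronglyMeasurable.mul hg).mul (by fun_prop : Continuous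
        fun x => exp (-(c * (k + 1) * x))).aestronglyMeasurable) (hG_le k)
  have hG_norm (k : ℕ) : ∫ x in Ioi (0:ℝ), ‖G k x‖ ≤ m ! / (c * (k + 1)) ^ (m + 1) := by
    rw [← integral_pow_mul_exp_neg_mul_Ioi m (hck k)]
    exact integral_mono_ae (hG_int k).norm (integrableOn_pow_mul_exp_neg_mul_Ioi m (hck k))
      (hG_le k)
  have hbound : Summable fun k : ℕ => (m ! : ℝ) / (c * (k + 1)) ^ (m + 1) := by
    have hp : Summable fun k : ℕ => 1 / ((k:ℝ) + 1) ^ (m + 1) := by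
      simpa using (summable_nat_add_iff 1).2 (Real.summable_one_div_nat_pow.2 (by omega))
    refine (hp.mul_left (m ! / c ^ (m + 1))).congr fun k => ?_
    rw [mul_pow]
    field_simp
  have hsum := Summable.of_nonneg_of_le (fun k => integral_nonneg fun x => norm_nonneg (G k x))
    hG_norm hbound
  rw [(hasSum_integral_of_summable_integral_norm hG_int hsum).tsum_eq]
  refine setIntegral_congr_fun measurableSet_Ioi fun x (hx : 0 < x) => ?_
  rw [div_eq_mul_inv, ← ((hasSum_exp_neg_succ_mul (mul_pos hc hx)).mul_left _).tsum_eq]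
  refine tsum_congr fun k => ?_
  simp only [hG]
  ring_nf

lemma cos_series_coeff_eq_Gamma_ratio (m l : ℕ) (n : ℝ) {K : ℝ} (hK : K ≠ 0) :
    (-1) ^ l * (π * n) ^ (2 * l) / (2 * l)! * ((m + 2 * l)! / (2 * π * K) ^ (m + 2 * l + 1)) =
      √π / (2 * π) ^ (m + 1) * (1 / K ^ (m + 1) *
        (Gamma ((m:ℝ) + 1 + 2 * l) / (l ! * Gamma (1 / 2 + l)) * (-n ^ 2 / (16 * K ^ 2)) ^ l)) := by
  have h16 : (16:ℝ) ^ l = 2 ^ (2 * l) * 2 ^ (2 * l) := by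
    rw [← mul_pow]
    norm_num [pow_mul]
  have hpow : (-n ^ 2 / (16 * K ^ 2)) ^ l =
      (-1) ^ l * n ^ (2 * l) / (2 ^ (2 * l) * 2 ^ (2 * l) * K ^ (2 * l)) := by
    rw [neg_div, neg_pow, div_pow, mul_pow, h16, pow_mul, pow_mul, pow_mul, mul_div_assoc]
  rw [show (m:ℝ) + 1 + 2 * l = ((m + 2 * l : ℕ) : ℝ) + 1 by push_cast; ring,
    Gamma_nat_eq_factorial, Gamma_half_add_nat, hpow, mul_pow, pow_add, pow_add]
  have : √π ≠ 0 := (sqrt_pos.2 pi_pos).ne'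
  field_simp
  ring

theorem stmt13 (m : ℕ) (hm : 1 ≤ m) (n : ℝ) (hn : 0 < n) (hn2 : n < 2) :
    (∫ x in Ioi (0 : ℝ), x ^ m * Real.cos (π * n * x) / (Real.exp (2 * π * x) - 1)) =
      Real.sqrt π / (2 * π) ^ (m + 1) *
        ∑' k : ℕ, (1 / ((k : ℝ) + 1) ^ (m + 1)) *
          ∑' l : ℕ, Real.Gamma ((m : ℝ) + 1 + 2 * l) /
            ((l.factorial : ℝ) * Real.Gamma (1 / 2 + l)) *
            (-n ^ 2 / (16 * (1 + (k : ℝ)) ^ 2)) ^ l := by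
  rw [integral_pow_mul_div_exp_sub_one_eq_tsum hm two_pi_pos (g := fun x => cos (π * n * x))
    (by fun_prop : Continuous fun x => cos (π * n * x)).aestronglyMeasurable
    fun x => abs_cos_le_one _, ← tsum_mul_left]
  refine tsum_congr fun k => ?_
  have hb : |π * n| < 2 * π * (k + 1) := by
    rw [abs_of_pos (by positivity)]
    nlinarith [pi_pos, (Nat.cast_nonneg k : (0:ℝ) ≤ k)]
  rw [← (hasSum_integral_pow_mul_cos_mul_exp_neg m hb).tsum_eq, ← tsum_mul_left, ← tsum_mul_left,
    add_comm 1 (k:ℝ)]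
  exact tsum_congr fun l => cos_series_coeff_eq_Gamma_ratio m l n (by positivity)
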